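/- arXiv:1601.05594 — 5 statements merged into one kernel-verified Lean document; each statement's English description precedes it below -/
import Mathlib

section
/- Let Σ be a finite alphabet, k ≥ 2, and let Γ be a closed subset of P(Σ^k) disjoint from the set of shift-invariant measures P_si(Σ^k). Then the set B(Γ) = { ω ∈ Σ^* : fr_ω^k ∈ Γ } is finite. -/
/-!
The shift defect `∑_ψ |∑_a η(aψ) - ∑_a η(ψa)|` is continuous and vanishes exactly on the
shift-invariant vectors, so it is bounded below by some `ε > 0` on the compact set `Γ`. For a
word `ω` of length `n`, the occurrences of `ψ` counted by the two inner sums are those starting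
in `[1, n-k+1)` and in `[0, n-k)`, which differ by at most one; hence the defect of `fr_ω^k` is
at most `|Σ|^(k-1) / (n-k+1)`, and `fr_ω^k ∈ Γ` bounds `n`.
-/

open Finset

def occCount {A : Type*} [DecidableEq A] (k : ℕ) (ω : List A) (φ : Fin k → A) : ℕ :=
  ((Finset.range (ω.length - k + 1)).filter
    (fun i => ∀ j : Fin k, ω[i + (j : ℕ)]? = some (φ j))).card

noncomputable def freq {A : Type*} [DecidableEq A] (k : ℕ) (ω : List A) (φ : Fin k → A) : ℝ :=
  (occCount k ω φ : ℝ) / ((ω.length - k + 1 : ℕ) : ℝ)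

def IsProbVec {A : Type*} [Fintype A] {k : ℕ} (η : (Fin k → A) → ℝ) : Prop :=
  (∀ φ, 0 ≤ η φ) ∧ ∑ φ : Fin k → A, η φ = 1

def ShiftInv {A : Type*} [Fintype A] (k : ℕ) (η : (Fin (k + 2) → A) → ℝ) : Prop :=
  ∀ ψ : Fin (k + 1) → A, ∑ a : A, η (Fin.cons a ψ) = ∑ a : A, η (Fin.snoc ψ a)

def genFrom {A V : Type*} (E : V → V → A → Prop) (ω : List A) : Prop :=
  ∃ f : Fin (ω.length + 1) → V, ∀ i : Fin ω.length, E (f i.castSucc) (f i.succ) (ω.get i)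

noncomputable def capacity {A : Type*} (T : Set (List A)) : ℝ :=
  Filter.atTop.limsup fun n : ℕ =>
    Real.logb 2 (Nat.card {ω : List A // ω ∈ T ∧ ω.length = n}) / n

def memGammaEps {A : Type*} [Fintype A] [DecidableEq A] {k : ℕ}
    (Γ : Set ((Fin k → A) → ℝ)) (ε : ℝ) (η : (Fin k → A) → ℝ) : Prop :=
  IsProbVec η ∧ ∃ δ, ε < δ ∧ ∀ μ : (Fin k → A) → ℝ, IsProbVec μ → μ ∉ Γ → δ ≤ ‖η - μ‖

section Occurrences

variable {A : Type*}

def OccursAt {m : ℕ} (ω : List A) (φ : Fin m → A) (i : ℕ) : Prop :=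
  ∀ j : Fin m, ω[i + (j : ℕ)]? = some (φ j)

instance [DecidableEq A] {m : ℕ} (ω : List A) (φ : Fin m → A) (i : ℕ) :
    Decidable (OccursAt ω φ i) :=
  inferInstanceAs (Decidable (∀ _ : Fin m, _))

lemma occursAt_cons_iff {m : ℕ} (ω : List A) (a : A) (ψ : Fin m → A) (i : ℕ) :
    OccursAt ω (Fin.cons a ψ : Fin (m + 1) → A) i ↔ ω[i]? = some a ∧ OccursAt ω ψ (i + 1) := by
  simp only [OccursAt, Fin.forall_fin_succ, Fin.val_zero, add_zero, Fin.cons_zero, Fin.val_succ,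
    Fin.cons_succ, add_assoc, add_comm 1]

lemma occursAt_snoc_iff {m : ℕ} (ω : List A) (a : A) (ψ : Fin m → A) (i : ℕ) :
    OccursAt ω (Fin.snoc ψ a : Fin (m + 1) → A) i ↔ OccursAt ω ψ i ∧ ω[i + m]? = some a := by
  simp only [OccursAt, Fin.forall_fin_succ', Fin.val_last, Fin.snoc_last, Fin.val_castSucc,
    Fin.snoc_castSucc]

variable [DecidableEq A]

lemma occCount_eq_card_filter_occursAt (k : ℕ) (ω : List A) (φ : Fin k → A) :
    occCount k ω φ = #{i ∈ range (ω.length - k + 1) | OccursAt ω φ i} := rfl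

lemma sum_card_filter_getElem?_eq_some_and [Fintype A] (ω : List A) (f : ℕ → ℕ) (s : Finset ℕ)
    (hs : ∀ i ∈ s, f i < ω.length) (p : ℕ → Prop) [DecidablePred p] :
    ∑ a : A, #{i ∈ s | ω[f i]? = some a ∧ p i} = #{i ∈ s | p i} := by
  simp only [card_filter]
  rw [sum_comm]
  refine sum_congr rfl fun i hi => ?_
  simp [List.getElem?_eq_getElem (hs i hi), and_comm (a := _ = _), ite_and]

lemma sum_occCount_cons [Fintype A] {m : ℕ} (ω : List A) (hω : m + 1 ≤ ω.length)
    (ψ : Fin m → A) :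
    ∑ a : A, occCount (m + 1) ω (Fin.cons a ψ) =
      #{i ∈ range (ω.length - (m + 1) + 1) | OccursAt ω ψ (i + 1)} := by
  simp only [occCount_eq_card_filter_occursAt, occursAt_cons_iff]
  exact sum_card_filter_getElem?_eq_some_and ω id _ (fun i hi => by simp at hi ⊢; omega) _

lemma sum_occCount_snoc [Fintype A] {m : ℕ} (ω : List A) (hω : m + 1 ≤ ω.length)
    (ψ : Fin m → A) :
    ∑ a : A, occCount (m + 1) ω (Fin.snoc ψ a) =
      #{i ∈ range (ω.length - (m + 1) + 1) | OccursAt ω ψ i} := by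
  simp only [occCount_eq_card_filter_occursAt, occursAt_snoc_iff, and_comm (a := OccursAt _ _ _)]
  exact sum_card_filter_getElem?_eq_some_and ω (· + m) _ (fun i hi => by simp at hi ⊢; omega) _

end Occurrences

lemma abs_card_filter_range_succ_sub_le (p : ℕ → Prop) [DecidablePred p] (N : ℕ) :
    |(#{i ∈ range N | p (i + 1)} : ℝ) - #{i ∈ range N | p i}| ≤ 1 := by
  have telescope := (sum_range_succ' (fun i => if p i then (1 : ℝ) else 0) N).symm.trans
    (sum_range_succ (fun i => if p i then (1 : ℝ) else 0) N)
  simp only [card_filter, Nat.cast_sum, Nat.cast_ite, Nat.cast_one, Nat.cast_zero]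
  rw [abs_le]
  constructor <;> split_ifs at telescope <;> linarith

section ShiftDefect

variable {A : Type*} [Fintype A] {m : ℕ}

def shiftDefect (η : (Fin (m + 1) → A) → ℝ) : ℝ :=
  ∑ ψ : Fin m → A, |∑ a : A, η (Fin.cons a ψ) - ∑ a : A, η (Fin.snoc ψ a)|

lemma continuous_shiftDefect : Continuous (shiftDefect : ((Fin (m + 1) → A) → ℝ) → ℝ) := by
  unfold shiftDefect
  fun_prop

lemma shiftDefect_pos {k : ℕ} {η : (Fin (k + 2) → A) → ℝ} (h : ¬ ShiftInv k η) :
    0 < shiftDefect η := by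
  obtain ⟨ψ, hψ⟩ := not_forall.mp h
  exact sum_pos' (fun _ _ => abs_nonneg _) ⟨ψ, mem_univ _, abs_pos.mpr (sub_ne_zero.mpr hψ)⟩

lemma shiftDefect_freq_le [DecidableEq A] (ω : List A) (hω : m + 1 ≤ ω.length) :
    shiftDefect (freq (m + 1) ω) ≤
      Fintype.card (Fin m → A) / ((ω.length - (m + 1) + 1 : ℕ) : ℝ) := by
  have hN : (0 : ℝ) < (ω.length - (m + 1) + 1 : ℕ) := by positivity
  rw [div_eq_mul_one_div, ← nsmul_eq_mul, ← card_univ, ← sum_const]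
  refine sum_le_sum fun ψ _ => ?_
  simp only [freq, ← sum_div, ← Nat.cast_sum, ← sub_div, abs_div, abs_of_pos hN]
  rw [sum_occCount_cons ω hω, sum_occCount_snoc ω hω]
  exact div_le_div_of_nonneg_right (abs_card_filter_range_succ_sub_le _ _) hN.le

end ShiftDefect

lemma isCompact_of_isProbVec {A : Type*} [Fintype A] {k : ℕ} {Γ : Set ((Fin k → A) → ℝ)}
    (hP : ∀ η ∈ Γ, IsProbVec η) (hcl : IsClosed Γ) : IsCompact Γ := by
  refine (isCompact_univ_pi fun _ => isCompact_Icc (a := (0 : ℝ)) (b := 1)).of_isClosed_subset hcl fun η hη φ _ => ?_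
  obtain ⟨hnonneg, hsum⟩ := hP η hη
  exact ⟨hnonneg φ, hsum ▸ single_le_sum (fun ψ _ => hnonneg ψ) (mem_univ φ)⟩

lemma exists_pos_forall_le_of_isCompact {X : Type*} [TopologicalSpace X] {K : Set X}
    (hK : IsCompact K) {f : X → ℝ} (hf : Continuous f) (hpos : ∀ x ∈ K, 0 < f x) :
    ∃ ε > 0, ∀ x ∈ K, ε ≤ f x := by
  rcases K.eq_empty_or_nonempty with rfl | hne
  · exact ⟨1, one_pos, by simp⟩
  obtain ⟨x₀, hx₀, hmin⟩ := hK.exists_isMinOn hne hf.continuousOn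
  exact ⟨f x₀, hpos x₀ hx₀, hmin⟩

theorem stmt1 {A : Type*} [Fintype A] [DecidableEq A] (k : ℕ)
    (Γ : Set ((Fin (k + 2) → A) → ℝ))
    (hP : ∀ η ∈ Γ, IsProbVec η) (hcl : IsClosed Γ)
    (hdisj : ∀ η ∈ Γ, ¬ ShiftInv k η) :
    {ω : List A | k + 2 ≤ ω.length ∧ freq (k + 2) ω ∈ Γ}.Finite := by
  obtain ⟨ε, hε, hεle⟩ := exists_pos_forall_le_of_isCompact (isCompact_of_isProbVec hP hcl)
    continuous_shiftDefect fun η hη => shiftDefect_pos (hdisj η hη)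
  set C : ℝ := (Fintype.card (Fin (k + 1) → A) : ℝ)
  refine (List.finite_length_le A (k + 1 + ⌈C / ε⌉₊)).subset fun ω ⟨hω, hmem⟩ => ?_
  have hN : (0 : ℝ) < (ω.length - (k + 2) + 1 : ℕ) := by positivity
  have hNle : ((ω.length - (k + 2) + 1 : ℕ) : ℝ) ≤ ⌈C / ε⌉₊ := by
    refine le_trans ?_ (Nat.le_ceil _)
    rw [le_div_iff₀ hε, ← le_div_iff₀' hN]
    exact (hεle _ hmem).trans (shiftDefect_freq_le ω hω)
  have := Nat.cast_le.mp hNle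
  show ω.length ≤ _
  omega
end

section
/- Let Γ ⊆ P(Σ^k) be convex, ε > 0, and m ≥ k sufficiently large (specifically large enough that (mk + 2(m−k+1))/(m² − k + 1) ≤ ε). Then R_m(Γ_ε) ⊆ N_{m²}(Γ): every length-m² contiguous subword of a concatenation of length-m words each with empirical frequency in Γ_ε has empirical k-tuple frequency in Γ. -/
open Finset

/-!
Fix a window `W` of length `m²` inside the concatenation. At least `m - 1` of the length-`m`
blocks, and at least one, lie entirely inside `W`; call them `w₁, …, w_q` and let `x_t` be their
frequency vectors. With `M = m - k + 1` and `n = m² - k + 1`, counting occurrences gives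
`n • freq W = M • ∑ x_t + r`, where `r ≥ 0` counts the occurrences in `W` not inside a full
block, and `∑ r = n - q M ≤ m k + 2 M`. Sharing `r` equally among the blocks writes `freq W` as
the average of the probability vectors `ν_t = (q M x_t + r) / n`, and
`‖x_t - ν_t‖ ≤ ∑ r / n ≤ ε`. Since `x_t ∈ Γ_ε`, every `ν_t` lies in `Γ`, hence so does
their average.
-/

namespace List

variable {α : Type*}

theorem length_flatten_of_forall_length_eq {L : List (List α)} {m : ℕ}
    (hL : ∀ u ∈ L, u.length = m) : L.flatten.length = L.length * m := by
  rw [length_flatten, map_congr_left hL, map_const', sum_replicate_nat]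

theorem flatten_drop_of_forall_length_eq {L : List (List α)} {m : ℕ}
    (hL : ∀ u ∈ L, u.length = m) (t : ℕ) : (L.drop t).flatten = L.flatten.drop (t * m) := by
  induction L generalizing t with
  | nil => simp
  | cons u L ih =>
    cases t with
    | zero => simp
    | succ t =>
      rw [drop_succ_cons, ih (fun v hv => hL v (mem_cons_of_mem u hv)), flatten_cons,
        Nat.succ_mul, Nat.add_comm, ← drop_drop, drop_left' (hL u mem_cons_self)]

theorem flatten_take_of_forall_length_eq {L : List (List α)} {m : ℕ}
    (hL : ∀ u ∈ L, u.length = m) (q : ℕ) : (L.take q).flatten = L.flatten.take (q * m) := by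
  induction L generalizing q with
  | nil => simp
  | cons u L ih =>
    cases q with
    | zero => simp
    | succ q =>
      rw [take_succ_cons, flatten_cons, flatten_cons, ih (fun v hv => hL v (mem_cons_of_mem u hv)),
        Nat.succ_mul, Nat.add_comm, ← hL u mem_cons_self, take_length_add_append]

theorem drop_take_infix_drop_take (l : List α) {i j n N : ℕ} (hij : i ≤ j)
    (hN : j + n ≤ i + N) : (l.drop j).take n <:+: (l.drop i).take N := by
  have h : (l.drop j).take n = (((l.drop i).take N).drop (j - i)).take n := by
    rw [drop_take, drop_drop, take_take, Nat.add_sub_cancel' hij, Nat.min_eq_left (by omega)]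
  rw [h]
  exact (take_prefix _ _).isInfix.trans (drop_suffix _ _).isInfix

end List

theorem exists_block_range_in_window {m : ℕ} (hm : 0 < m) (i : ℕ) :
    ∃ t q, i ≤ t * m ∧ (t + q) * m ≤ i + m ^ 2 ∧ m - 1 ≤ q ∧ 0 < q := by
  obtain ⟨p, a, ha, rfl⟩ : ∃ p a, a < m ∧ i = p * m + a :=
    ⟨i / m, i % m, Nat.mod_lt i hm, (Nat.div_add_mod' i m).symm⟩
  rcases Nat.eq_zero_or_pos a with rfl | ha0
  · exact ⟨p, m, by simp, by rw [add_mul, sq]; omega, by omega, hm⟩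
  · refine ⟨p + 1, m - 1, by rw [add_mul]; omega, ?_, le_rfl, by omega⟩
    rw [show p + 1 + (m - 1) = p + m by omega, add_mul, sq]
    omega

theorem exists_blocks_infix_window {α : Type*} {L : List (List α)} {m i : ℕ} (hm : 0 < m)
    (hL : ∀ u ∈ L, u.length = m) (hi : i + m ^ 2 ≤ L.flatten.length) :
    ∃ B : List (List α), B <:+: L ∧ m - 1 ≤ B.length ∧ 0 < B.length ∧
      B.flatten <:+: (L.flatten.drop i).take (m ^ 2) := by
  obtain ⟨t, q, hit, htq, hqm, hq⟩ := exists_block_range_in_window hm i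
  have htqL : t + q ≤ L.length := by
    rw [List.length_flatten_of_forall_length_eq hL] at hi
    exact Nat.le_of_mul_le_mul_right (htq.trans hi) hm
  refine ⟨(L.drop t).take q, (List.take_prefix _ _).isInfix.trans (List.drop_suffix _ _).isInfix,
    by simp; omega, by simp; omega, ?_⟩
  rw [List.flatten_take_of_forall_length_eq (fun u hu => hL u (List.mem_of_mem_drop hu)),
    List.flatten_drop_of_forall_length_eq hL]
  exact List.drop_take_infix_drop_take _ hit (by rw [← add_mul]; exact htq)

section OccCount

variable {A : Type*} [DecidableEq A] {k : ℕ}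

theorem occCount_eq_card_filter_range (hk : 1 ≤ k) {ω : List A} {N : ℕ} (hN : ω.length ≤ N)
    (φ : Fin k → A) :
    occCount k ω φ =
      #{p ∈ Finset.range N | ∀ j : Fin k, ω[p + (j : ℕ)]? = some (φ j)} := by
  have hlen : ∀ p, (∀ j : Fin k, ω[p + (j : ℕ)]? = some (φ j)) → p + k ≤ ω.length := by
    intro p h
    obtain ⟨hlt, -⟩ := List.getElem?_eq_some_iff.mp (h ⟨k - 1, by omega⟩)
    simp only at hlt
    omega
  unfold occCount
  congr 1
  ext p
  simp only [Finset.mem_filter, Finset.mem_range]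
  exact ⟨fun ⟨_, h⟩ => ⟨by have := hlen p h; omega, h⟩,
    fun ⟨_, h⟩ => ⟨by have := hlen p h; omega, h⟩⟩

theorem occCount_nil (hk : 1 ≤ k) (φ : Fin k → A) : occCount k [] φ = 0 := by
  simp [occCount_eq_card_filter_range hk (ω := []) (N := 0) le_rfl]

theorem occCount_add_le_occCount_append (hk : 1 ≤ k) (u v : List A) (φ : Fin k → A) :
    occCount k u φ + occCount k v φ ≤ occCount k (u ++ v) φ := by
  set Su := {p ∈ Finset.range u.length | ∀ j : Fin k, u[p + (j : ℕ)]? = some (φ j)}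
  set Sv := {p ∈ Finset.range v.length | ∀ j : Fin k, v[p + (j : ℕ)]? = some (φ j)}
  have hdisj : Disjoint Su (Sv.image (u.length + ·)) := by
    simp only [Finset.disjoint_left, Su, Sv, Finset.mem_filter, Finset.mem_range,
      Finset.mem_image]
    rintro p ⟨hp, -⟩ ⟨p', -, rfl⟩
    omega
  rw [occCount_eq_card_filter_range hk le_rfl, occCount_eq_card_filter_range hk le_rfl,
    occCount_eq_card_filter_range hk (N := u.length + v.length) (by simp),
    ← card_image_of_injective Sv (add_right_injective u.length), ← card_union_of_disjoint hdisj]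
  apply card_le_card
  intro p
  simp only [Su, Sv, Finset.mem_union, Finset.mem_filter, Finset.mem_range, Finset.mem_image]
  rintro (⟨hp, h⟩ | ⟨p, ⟨hp, h⟩, rfl⟩)
  · refine ⟨by omega, fun j => ?_⟩
    rw [List.getElem?_append_left (List.getElem?_eq_some_iff.mp (h j)).1, h j]
  · refine ⟨by omega, fun j => ?_⟩
    rw [List.getElem?_append_right (by omega), ← h j]
    congr 1
    omega

theorem sum_map_occCount_le_occCount_flatten (hk : 1 ≤ k) (B : List (List A)) (φ : Fin k → A) :
    (B.map (occCount k · φ)).sum ≤ occCount k B.flatten φ := by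
  induction B with
  | nil => simp [occCount_nil hk]
  | cons u B ih =>
    simp only [List.map_cons, List.sum_cons, List.flatten_cons]
    exact (Nat.add_le_add_left ih _).trans (occCount_add_le_occCount_append hk _ _ _)

theorem occCount_le_of_isInfix (hk : 1 ≤ k) {u v : List A} (h : u <:+: v) (φ : Fin k → A) :
    occCount k u φ ≤ occCount k v φ := by
  obtain ⟨s, t, rfl⟩ := h
  calc occCount k u φ ≤ occCount k s φ + occCount k u φ + occCount k t φ := by omega
    _ ≤ occCount k (s ++ u ++ t) φ :=
      (Nat.add_le_add_right (occCount_add_le_occCount_append hk _ _ _) _).trans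
        (occCount_add_le_occCount_append hk _ _ _)

theorem sum_occCount [Fintype A] {u : List A} (hku : k ≤ u.length) :
    ∑ φ : Fin k → A, occCount k u φ = u.length - k + 1 := by
  simp only [occCount, card_filter]
  rw [sum_comm]
  conv_rhs => rw [← card_range (u.length - k + 1), card_eq_sum_ones]
  refine sum_congr rfl fun p hp => ?_
  have hlt : ∀ j : Fin k, p + (j : ℕ) < u.length := fun j => by
    have := mem_range.mp hp
    omega
  have hocc : ∀ φ : Fin k → A, (∀ j : Fin k, u[p + (j : ℕ)]? = some (φ j)) ↔
      (fun j : Fin k => u[p + (j : ℕ)]'(hlt j)) = φ := fun φ => by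
    simp [funext_iff, List.getElem?_eq_getElem (hlt _)]
  simp only [hocc, sum_ite_eq, mem_univ, if_true]

theorem freq_mul (ω : List A) (φ : Fin k → A) :
    freq k ω φ * ((ω.length - k + 1 : ℕ) : ℝ) = occCount k ω φ :=
  div_mul_cancel₀ _ (Nat.cast_ne_zero.mpr (Nat.succ_ne_zero _))

def occCountResidual (k : ℕ) (W : List A) (B : List (List A)) (φ : Fin k → A) : ℝ :=
  occCount k W φ - ∑ j : Fin B.length, (occCount k B[j] φ : ℝ)

theorem occCountResidual_nonneg (hk : 1 ≤ k) {W : List A} {B : List (List A)}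
    (hBW : B.flatten <:+: W) (φ : Fin k → A) : 0 ≤ occCountResidual k W B φ := by
  have h := (sum_map_occCount_le_occCount_flatten hk B φ).trans (occCount_le_of_isInfix hk hBW φ)
  rw [← Fin.sum_univ_fun_getElem] at h
  rw [occCountResidual, sub_nonneg]
  exact_mod_cast h

theorem length_mul_add_sum_occCountResidual [Fintype A] {W : List A} {B : List (List A)}
    {m : ℕ} (hB : ∀ u ∈ B, u.length = m) (hkm : k ≤ m) (hkW : k ≤ W.length) :
    B.length * ((m - k + 1 : ℕ) : ℝ) + ∑ φ, occCountResidual k W B φ =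
      ((W.length - k + 1 : ℕ) : ℝ) := by
  have hblock : ∀ j : Fin B.length, ∑ φ : Fin k → A, occCount k B[j] φ = m - k + 1 := by
    intro j
    have hj : B[j].length = m := hB _ (List.getElem_mem _)
    rw [sum_occCount (hj ▸ hkm), hj]
  simp only [occCountResidual, sum_sub_distrib]
  rw [sum_comm]
  simp only [← Nat.cast_sum, hblock, sum_occCount hkW, sum_const, card_univ, Fintype.card_fin,
    nsmul_eq_mul]
  push_cast
  ring

theorem freq_eq_pooled {W : List A} {B : List (List A)} {m : ℕ} (hB : ∀ u ∈ B, u.length = m) :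
    freq k W = fun φ => (((m - k + 1 : ℕ) : ℝ) * ∑ j : Fin B.length, freq k B[j] φ +
      occCountResidual k W B φ) / ((W.length - k + 1 : ℕ) : ℝ) := by
  ext φ
  have hblock : ∀ j : Fin B.length,
      ((m - k + 1 : ℕ) : ℝ) * freq k B[j] φ = occCount k B[j] φ := by
    intro j
    have hj : B[j].length = m := hB _ (List.getElem_mem _)
    rw [mul_comm, ← hj, freq_mul]
  rw [freq, mul_sum, sum_congr rfl fun j _ => hblock j, occCountResidual, add_sub_cancel]

end OccCount

section Blend

variable {A : Type*} [Fintype A] {k : ℕ}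

-- `blend (q * M) x_t r` is the vector `ν_t` of the proof sketch.
noncomputable def blend (s : ℝ) (x r : (Fin k → A) → ℝ) (φ : Fin k → A) : ℝ :=
  (s * x φ + r φ) / (s + ∑ ψ, r ψ)

theorem IsProbVec.le_one {x : (Fin k → A) → ℝ} (hx : IsProbVec x) (φ : Fin k → A) :
    x φ ≤ 1 :=
  hx.2 ▸ single_le_sum (fun ψ _ => hx.1 ψ) (mem_univ φ)

theorem isProbVec_blend {x r : (Fin k → A) → ℝ} (hx : IsProbVec x) (hr : ∀ φ, 0 ≤ r φ)
    {s : ℝ} (hs : 0 < s) : IsProbVec (blend s x r) := by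
  have hR : 0 ≤ ∑ ψ, r ψ := sum_nonneg fun ψ _ => hr ψ
  refine ⟨fun φ => by have := hx.1 φ; have := hr φ; rw [blend]; positivity, ?_⟩
  simp only [blend]
  rw [← sum_div, sum_add_distrib, ← mul_sum, hx.2, mul_one, div_self (by positivity)]

theorem norm_sub_blend_le {x r : (Fin k → A) → ℝ} (hx : IsProbVec x)
    (hr : ∀ φ, 0 ≤ r φ) {s : ℝ} (hs : 0 < s) :
    ‖x - blend s x r‖ ≤ (∑ ψ, r ψ) / (s + ∑ ψ, r ψ) := by
  set R := ∑ ψ, r ψ with hR_def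
  have hR : 0 ≤ R := sum_nonneg fun ψ _ => hr ψ
  refine (pi_norm_le_iff_of_nonneg (by positivity)).mpr fun φ => ?_
  have hrR : r φ ≤ R := single_le_sum (fun ψ _ => hr ψ) (mem_univ φ)
  have hr0 := hr φ
  have hx0 := hx.1 φ
  have hx1 := hx.le_one φ
  have hdiff : x φ - blend s x r φ = (R * x φ - r φ) / (s + R) := by
    rw [blend, ← hR_def]
    field_simp
    ring
  have hnum : |R * x φ - r φ| ≤ R := abs_le.mpr ⟨by nlinarith, by nlinarith⟩
  rw [Pi.sub_apply, hdiff, Real.norm_eq_abs, abs_div, abs_of_pos (by positivity : 0 < s + R)]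
  exact div_le_div_of_nonneg_right hnum (by positivity)

end Blend

section Gamma

variable {A : Type*} [Fintype A] [DecidableEq A] {k : ℕ}

theorem memGammaEps.mem_of_norm_sub_le {Γ : Set ((Fin k → A) → ℝ)} {ε : ℝ}
    {η μ : (Fin k → A) → ℝ} (hη : memGammaEps Γ ε η) (hμ : IsProbVec μ)
    (h : ‖η - μ‖ ≤ ε) : μ ∈ Γ := by
  by_contra hμΓ
  obtain ⟨-, δ, hεδ, hδ⟩ := hη
  linarith [hδ μ hμ hμΓ]

theorem Convex.pooled_mem {Γ : Set ((Fin k → A) → ℝ)} (hΓ : Convex ℝ Γ) {ι : Type*}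
    [Fintype ι] [Nonempty ι] {ε : ℝ} {x : ι → (Fin k → A) → ℝ}
    (hx : ∀ t, memGammaEps Γ ε (x t)) {r : (Fin k → A) → ℝ} (hr : ∀ φ, 0 ≤ r φ)
    {M n : ℝ} (hM : 0 < M) (hn : Fintype.card ι * M + ∑ ψ, r ψ = n)
    (hε : (∑ ψ, r ψ) / n ≤ ε) :
    (fun φ => (M * ∑ t, x t φ + r φ) / n) ∈ Γ := by
  set q : ℝ := (Fintype.card ι : ℝ)
  have hq : 0 < q := Nat.cast_pos.mpr Fintype.card_pos
  subst hn
  have hν : ∀ t, blend (q * M) (x t) r ∈ Γ := fun t =>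
    (hx t).mem_of_norm_sub_le (isProbVec_blend (hx t).1 hr (by positivity))
      ((norm_sub_blend_le (hx t).1 hr (by positivity)).trans hε)
  have hmix : (fun φ => (M * ∑ t, x t φ + r φ) / (q * M + ∑ ψ, r ψ)) =
      ∑ t, q⁻¹ • blend (q * M) (x t) r := by
    ext φ
    simp only [blend, Finset.sum_apply, Pi.smul_apply, smul_eq_mul, ← Finset.mul_sum,
      ← Finset.sum_div, Finset.sum_add_distrib, Finset.sum_const, Finset.card_univ, nsmul_eq_mul]
    field_simp
    simp only [q]
    ring
  rw [hmix]
  exact hΓ.sum_mem (fun t _ => by positivity) (by simp [q, hq.ne']) fun t _ => hν t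

end Gamma

theorem residual_div_le {k m q : ℕ} (hkm : k ≤ m) (hq : m - 1 ≤ q) {R : ℝ}
    (hR : q * ((m - k + 1 : ℕ) : ℝ) + R = ((m ^ 2 - k + 1 : ℕ) : ℝ)) :
    R / ((m ^ 2 - k + 1 : ℕ) : ℝ) ≤
      ((m : ℝ) * k + 2 * ((m : ℝ) - k + 1)) / ((m : ℝ) ^ 2 - k + 1) := by
  have hkm2 : k ≤ m ^ 2 := hkm.trans (Nat.le_self_pow two_ne_zero m)
  have hk : (k : ℝ) ≤ m := Nat.cast_le.mpr hkm
  have hk2 : (k : ℝ) ≤ m ^ 2 := by exact_mod_cast hkm2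
  have hq' : (m : ℝ) - 1 ≤ q := by
    rw [sub_le_iff_le_add]
    exact_mod_cast (by omega : m ≤ q + 1)
  push_cast [Nat.cast_sub hkm2, Nat.cast_sub hkm] at hR ⊢
  apply div_le_div_of_nonneg_right _ (by linarith)
  nlinarith [mul_le_mul_of_nonneg_right hq' (by linarith : (0 : ℝ) ≤ m - k + 1)]

theorem stmt9_general {A : Type*} [Fintype A] [DecidableEq A] (k m : ℕ)
    (hk : 1 ≤ k) (hkm : k ≤ m)
    (Γ : Set ((Fin k → A) → ℝ)) (hconv : Convex ℝ Γ)
    (ε : ℝ)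
    (hbound : ((m : ℝ) * (k : ℝ) + 2 * ((m : ℝ) - (k : ℝ) + 1)) /
        ((m : ℝ) ^ 2 - (k : ℝ) + 1) ≤ ε)
    (L : List (List A)) (hL : ∀ w ∈ L, w.length = m ∧ memGammaEps Γ ε (freq k w)) :
    ∀ i, i + m ^ 2 ≤ L.flatten.length → freq k ((L.flatten.drop i).take (m ^ 2)) ∈ Γ := by
  intro i hi
  obtain ⟨B, hBL, hBm, hB0, hBW⟩ :=
    exists_blocks_infix_window (by omega) (fun u hu => (hL u hu).1) hi
  have hB : ∀ u ∈ B, u.length = m := fun u hu => (hL u (hBL.subset hu)).1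
  have hWlen : ((L.flatten.drop i).take (m ^ 2)).length = m ^ 2 := by
    rw [List.length_take, List.length_drop]
    omega
  have hn := length_mul_add_sum_occCountResidual hB hkm
    (hWlen ▸ hkm.trans (Nat.le_self_pow two_ne_zero m))
  have : Nonempty (Fin B.length) := Fin.pos_iff_nonempty.mp hB0
  rw [freq_eq_pooled hB]
  refine hconv.pooled_mem (fun j => (hL _ (hBL.subset (List.getElem_mem _))).2)
    (occCountResidual_nonneg hk hBW) (by positivity) (by simpa using hn) (le_trans ?_ hbound)
  rw [hWlen] at hn ⊢
  exact residual_div_le hkm hBm hn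

theorem stmt9 {A : Type*} [Fintype A] [DecidableEq A] (k m : ℕ)
    (hk : 1 ≤ k) (hkm : k ≤ m)
    (Γ : Set ((Fin k → A) → ℝ)) (hΓP : ∀ η ∈ Γ, IsProbVec η) (hconv : Convex ℝ Γ)
    (ε : ℝ) (hε : 0 < ε)
    (hbound : ((m : ℝ) * (k : ℝ) + 2 * ((m : ℝ) - (k : ℝ) + 1)) /
        ((m : ℝ) ^ 2 - (k : ℝ) + 1) ≤ ε)
    (L : List (List A)) (hL : ∀ w ∈ L, w.length = m ∧ memGammaEps Γ ε (freq k w)) :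
    ∀ i, i + m ^ 2 ≤ L.flatten.length → freq k ((L.flatten.drop i).take (m ^ 2)) ∈ Γ :=
  stmt9_general k m hk hkm Γ hconv ε hbound L hL
end

section
/- Let ω′ be a contiguous subword of length m² of a concatenation ω_j ω_{j+1} ⋯ ω_{j+m} of m+1 words each of length m ≥ k with empirical k-tuple frequencies μ_{j},…,μ_{j+m}, and let μ be their average. Then for every φ ∈ Σ^k, |fr_{ω′}^k(φ) − μ(φ)| ≤ (mk + 2(m−k+1))/(m² − k + 1). -/
open Finset

/-!
Count occurrences of `φ` at absolute positions `p` of the concatenation `L = ω_0 ⋯ ω_m`: the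
window positions of `ω'` form an interval `[t, t + m² - k]` with `t ≤ m`, and those of `ω_i` the
interval `[i m, i m + m - k]`. The blocks of the inner words `ω_1, …, ω_{m-1}` are disjoint and
lie inside the window interval of `ω'`, so the count `N` in `ω'` is squeezed between the count
`f` in the inner words and `f + (m² - k + 1) - (m - 1)(m - k + 1)`, while the count `s` in all
`m + 1` words lies between `f` and `f + 2(m - k + 1)`. Comparing `N / (m² - k + 1)` with
`s / ((m + 1)(m - k + 1))` under these constraints gives the bound.
-/

section Flatten

variable {α : Type*}

lemma List.take_drop_mul_flatten_of_forall_length_eq {l : List (List α)} {m : ℕ}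
    (h : ∀ w ∈ l, w.length = m) (i : ℕ) (hi : i < l.length) :
    (l.flatten.drop (i * m)).take m = l[i] := by
  have hmap : l.map List.length = List.replicate l.length m := by
    simpa [List.eq_replicate_iff] using h
  have hsum : ((l.map List.length).take i).sum = i * m := by
    simp [hmap, Nat.min_eq_left hi.le]
  rw [← hsum, List.drop_sum_flatten, List.drop_eq_getElem_cons hi, List.flatten_cons,
    List.take_left' (h _ (List.getElem_mem hi))]

lemma List.length_flatten_ofFn_of_length_eq {n m : ℕ} {ws : Fin n → List α}
    (h : ∀ i, (ws i).length = m) : (List.ofFn ws).flatten.length = n * m := by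
  simp [List.length_flatten, List.sum_ofFn, h]

end Flatten

section Occurrences

variable {A : Type*} [DecidableEq A] {k : ℕ}

def MatchesAt (L : List A) (φ : Fin k → A) (p : ℕ) : Prop :=
  ∀ j : Fin k, L[p + (j : ℕ)]? = some (φ j)

instance (L : List A) (φ : Fin k → A) : DecidablePred (MatchesAt L φ) :=
  fun _ => by unfold MatchesAt; infer_instance

lemma occCount_eq_card_filter_matchesAt (ω : List A) (φ : Fin k → A) :
    occCount k ω φ = #{p ∈ range (ω.length - k + 1) | MatchesAt ω φ p} := rfl

lemma occCount_take_drop (L : List A) (φ : Fin k → A) {t n : ℕ} (hk : k ≤ n)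
    (hn : t + n ≤ L.length) :
    occCount k ((L.drop t).take n) φ = #{p ∈ Ico t (t + (n - k + 1)) | MatchesAt L φ p} := by
  have hlen : ((L.drop t).take n).length = n := by simp; omega
  have hIco : Ico t (t + (n - k + 1)) = (range (n - k + 1)).map (addLeftEmbedding t) := by
    rw [range_eq_Ico, map_add_left_Ico, add_zero]
  rw [occCount_eq_card_filter_matchesAt, hlen, hIco, filter_map, card_map]
  refine congrArg card (filter_congr fun p hp => forall_congr' fun j => ?_)
  have : p + j < n := by simp at hp; omega
  simp [List.getElem?_take_of_lt this, add_assoc]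

lemma freq_take_drop (L : List A) (φ : Fin k → A) {t n : ℕ} (hk : k ≤ n)
    (hn : t + n ≤ L.length) :
    freq k ((L.drop t).take n) φ =
      #{p ∈ Ico t (t + (n - k + 1)) | MatchesAt L φ p} / ((n : ℝ) - k + 1) := by
  have hlen : ((L.drop t).take n).length = n := by simp; omega
  rw [freq, occCount_take_drop L φ hk hn, hlen, Nat.cast_add, Nat.cast_sub hk, Nat.cast_one]

lemma freq_ofFn_eq_card_filter_flatten {m : ℕ} (ws : Fin (m + 1) → List A)
    (hlen : ∀ i, (ws i).length = m)
    (φ : Fin k → A) (hkm : k ≤ m) (i : Fin (m + 1)) :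
    freq k (ws i) φ = #{p ∈ Ico (i * m) (i * m + (m - k + 1)) |
      MatchesAt (List.ofFn ws).flatten φ p} / ((m : ℝ) - k + 1) := by
  have hws : ∀ w ∈ List.ofFn ws, w.length = m := fun w hw => by
    obtain ⟨j, rfl⟩ := List.mem_ofFn.mp hw
    exact hlen j
  have hi : (i : ℕ) * m + m ≤ (List.ofFn ws).flatten.length := by
    rw [List.length_flatten_ofFn_of_length_eq hlen, ← Nat.succ_mul]
    exact Nat.mul_le_mul_right m i.isLt
  rw [← List.getElem_ofFn (f := ws) (h := by simp; omega),
    ← List.take_drop_mul_flatten_of_forall_length_eq hws _ (by simp; omega),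
    freq_take_drop _ φ hkm hi]

end Occurrences

section Blocks

variable (P : ℕ → Prop) [DecidablePred P]

lemma card_filter_Ico_le (a e : ℕ) : #{p ∈ Ico a (a + e) | P p} ≤ e :=
  (card_filter_le _ _).trans (by simp)

variable {m e : ℕ}

lemma pairwiseDisjoint_Ico_mul (he : e ≤ m) (s : Set ℕ) :
    s.PairwiseDisjoint fun i => Ico (i * m) (i * m + e) := by
  intro i _ j _ hij
  refine disjoint_left.mpr fun p hpi hpj => hij ?_
  rw [mem_Ico] at hpi hpj
  have hdiv : ∀ {i}, i * m ≤ p → p < i * m + e → p / m = i := fun h₁ h₂ =>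
    Nat.div_eq_of_lt_le h₁ (by rw [Nat.succ_mul]; omega)
  rw [← hdiv hpi.1 hpi.2, ← hdiv hpj.1 hpj.2]

lemma card_filter_le_card_filter_add_card_sdiff {U W : Finset ℕ} (h : U ⊆ W) :
    #{p ∈ W | P p} ≤ #{p ∈ U | P p} + (#W - #U) := by
  rw [← card_sdiff_of_subset h]
  refine (card_le_card fun p hp => ?_).trans (card_union_le _ _)
  rw [mem_filter] at hp
  by_cases hpU : p ∈ U
  · exact mem_union_left _ (mem_filter.mpr ⟨hpU, hp.2⟩)
  · exact mem_union_right _ (mem_sdiff.mpr ⟨hp.1, hpU⟩)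

lemma card_filter_window_sandwich (he : e ≤ m) {t d : ℕ} (ht : t ≤ m)
    (hd : m * m + e ≤ t + d + m) :
    ∑ i ∈ Ico 1 m, #{p ∈ Ico (i * m) (i * m + e) | P p} + e ≤ m * e ∧
    ∑ i ∈ Ico 1 m, #{p ∈ Ico (i * m) (i * m + e) | P p} ≤ #{p ∈ Ico t (t + d) | P p} ∧
    #{p ∈ Ico t (t + d) | P p} + m * e ≤
      ∑ i ∈ Ico 1 m, #{p ∈ Ico (i * m) (i * m + e) | P p} + d + e := by
  set U := (Ico 1 m).biUnion fun i => Ico (i * m) (i * m + e)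
  have hdisj := pairwiseDisjoint_Ico_mul he (Ico 1 m : Set ℕ)
  have hsum : ∑ i ∈ Ico 1 m, #{p ∈ Ico (i * m) (i * m + e) | P p} = #{p ∈ U | P p} := by
    rw [filter_biUnion, card_biUnion (hdisj.mono fun i => filter_subset _ _)]
  have hU : #U + e = m * e := by
    rw [card_biUnion hdisj]
    rcases m with _ | m
    · obtain rfl : e = 0 := by omega
      simp
    · simp [Nat.succ_mul]
  have hUW : U ⊆ Ico t (t + d) := by
    intro p hp
    simp only [U, mem_biUnion, mem_Ico] at hp ⊢
    obtain ⟨i, hi, hpi⟩ := hp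
    have h₁ : m ≤ i * m := Nat.le_mul_of_pos_left m hi.1
    have h₂ : (i + 1) * m ≤ m * m := Nat.mul_le_mul_right m hi.2
    rw [Nat.succ_mul] at h₂
    omega
  have hUd : #U ≤ d := by simpa using card_le_card hUW
  have hW := card_filter_le_card_filter_add_card_sdiff P hUW
  rw [Nat.card_Ico, Nat.add_sub_cancel_left] at hW
  rw [hsum]
  have hPU : #{p ∈ U | P p} ≤ #U := card_filter_le _ _
  exact ⟨by omega, card_le_card (filter_subset_filter _ hUW), by omega⟩

end Blocks

lemma abs_div_sub_div_le_of_bounds {M K N a f b : ℝ} (hK : 1 ≤ K) (hKM : K ≤ M)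
    (ha : 0 ≤ a) (haE : a ≤ M - K + 1) (hb : 0 ≤ b) (hbE : b ≤ M - K + 1) (hf : 0 ≤ f)
    (hfE : f + (M - K + 1) ≤ M * (M - K + 1)) (hfN : f ≤ N)
    (hNf : N + M * (M - K + 1) ≤ f + (M ^ 2 - K + 1) + (M - K + 1)) :
    |N / (M ^ 2 - K + 1) - (a + f + b) / ((M + 1) * (M - K + 1))| ≤
      (M * K + 2 * (M - K + 1)) / (M ^ 2 - K + 1) := by
  have hE : 0 < M - K + 1 := by linarith
  have hD : 0 < M ^ 2 - K + 1 := by nlinarith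
  have hT : 0 < (M + 1) * (M - K + 1) := by nlinarith
  have key : |N * ((M + 1) * (M - K + 1)) - (M ^ 2 - K + 1) * (a + f + b)| ≤
      (M * K + 2 * (M - K + 1)) * ((M + 1) * (M - K + 1)) := by
    rw [abs_le]
    -- `(M + 1) (M - K + 1) - (M ^ 2 - K + 1) = M (2 - K)`: its sign decides which bound on
    -- `a + f + b` is needed
    rcases le_total K 2 with hK2 | hK2
    · have : 0 ≤ M * (2 - K) := mul_nonneg (by linarith) (by linarith)
      constructor <;> nlinarith
    · have : 0 ≤ M * (K - 2) := mul_nonneg (by linarith) (by linarith)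
      constructor <;> nlinarith
  rw [div_sub_div _ _ hD.ne' hT.ne', abs_div, abs_of_pos (mul_pos hD hT),
    div_le_div_iff₀ (mul_pos hD hT) hD]
  calc _ ≤ (M * K + 2 * (M - K + 1)) * ((M + 1) * (M - K + 1)) * (M ^ 2 - K + 1) :=
        mul_le_mul_of_nonneg_right key hD.le
    _ = _ := by ring

theorem stmt10_general {A : Type*} [DecidableEq A] (k m : ℕ)
    (hk : 1 ≤ k) (hkm : k ≤ m)
    (ws : Fin (m + 1) → List A) (hlen : ∀ i, (ws i).length = m)
    (t : ℕ) (ht : t + m ^ 2 ≤ (List.ofFn ws).flatten.length)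
    (μ : (Fin k → A) → ℝ)
    (hμ : ∀ φ, μ φ = (1 / ((m : ℝ) + 1)) * ∑ i : Fin (m + 1), freq k (ws i) φ)
    (φ : Fin k → A) :
    |freq k (((List.ofFn ws).flatten.drop t).take (m ^ 2)) φ - μ φ| ≤
      ((m : ℝ) * (k : ℝ) + 2 * ((m : ℝ) - (k : ℝ) + 1)) /
        ((m : ℝ) ^ 2 - (k : ℝ) + 1) := by
  set L := (List.ofFn ws).flatten
  set g : ℕ → ℕ := fun i => #{p ∈ Ico (i * m) (i * m + (m - k + 1)) | MatchesAt L φ p}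
  have htm : t ≤ m := by
    rw [List.length_flatten_ofFn_of_length_eq hlen, Nat.succ_mul, sq] at ht; omega
  have hk2 : k ≤ m ^ 2 := hkm.trans (Nat.le_self_pow two_ne_zero m)
  obtain ⟨hfm, hfN, hNf⟩ := card_filter_window_sandwich (MatchesAt L φ)
    (by omega : m - k + 1 ≤ m) (d := m ^ 2 - k + 1) htm (by rw [sq] at hk2 ⊢; omega)
  have hg : ∀ i, g i ≤ m - k + 1 := fun i => card_filter_Ico_le _ _ _
  have hsum : ∑ i : Fin (m + 1), g i = g 0 + ∑ i ∈ Ico 1 m, g i + g m := by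
    rw [Fin.sum_univ_eq_sum_range g, range_eq_Ico, sum_eq_sum_Ico_succ_bot (by omega),
      sum_Ico_succ_top (by omega), add_assoc]
  have hE : ((m - k + 1 : ℕ) : ℝ) = m - k + 1 := by push_cast [Nat.cast_sub hkm]; ring
  have hD : ((m ^ 2 - k + 1 : ℕ) : ℝ) = m ^ 2 - k + 1 := by push_cast [Nat.cast_sub hk2]; ring
  rw [hμ, freq_take_drop L φ hk2 ht,
    sum_congr rfl fun i _ => freq_ofFn_eq_card_filter_flatten ws hlen φ hkm i,
    ← sum_div, ← Nat.cast_sum, hsum, div_mul_div_comm, one_mul, Nat.cast_pow, Nat.cast_add,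
    Nat.cast_add]
  refine abs_div_sub_div_le_of_bounds (by exact_mod_cast hk) (by exact_mod_cast hkm)
    (Nat.cast_nonneg _) ?_ (Nat.cast_nonneg _) ?_ (Nat.cast_nonneg _) ?_ ?_ ?_
  · rw [← hE]; exact_mod_cast hg 0
  · rw [← hE]; exact_mod_cast hg m
  · rw [← hE]; exact_mod_cast hfm
  · exact_mod_cast hfN
  · rw [← hE, ← hD]; exact_mod_cast hNf

theorem stmt10 {A : Type*} [Fintype A] [DecidableEq A] (k m : ℕ)
    (hk : 1 ≤ k) (hkm : k ≤ m)
    (ws : Fin (m + 1) → List A) (hlen : ∀ i, (ws i).length = m)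
    (t : ℕ) (ht : t + m ^ 2 ≤ (List.ofFn ws).flatten.length)
    (μ : (Fin k → A) → ℝ)
    (hμ : ∀ φ, μ φ = (1 / ((m : ℝ) + 1)) * ∑ i : Fin (m + 1), freq k (ws i) φ)
    (φ : Fin k → A) :
    |freq k (((List.ofFn ws).flatten.drop t).take (m ^ 2)) φ - μ φ| ≤
      ((m : ℝ) * (k : ℝ) + 2 * ((m : ℝ) - (k : ℝ) + 1)) /
        ((m : ℝ) ^ 2 - (k : ℝ) + 1) :=
  stmt10_general k m hk hkm ws hlen t ht μ hμ φ
end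

section
/- Let η be a rational, entrywise positive, shift-invariant probability measure on Σ^k. Then for every word α ∈ Σ^*, there exists β ∈ Σ^* such that the empirical k-tuple frequency of αβ equals η exactly: fr_{αβ}^k = η. -/
open Finset

/-!
Read a word as a walk in the de Bruijn graph whose vertices are the words of length `k + 1` and
whose edges are the words of length `k + 2`; the window counts of the word are the edge
multiplicities of the walk. Clearing denominators turns `η` into a positive integer edge weighting
`M` in which every vertex has equal in- and out-degree (shift invariance).

Pad `α` and extend it to a walk that passes through every vertex and returns to its starting
vertex. Scaling `M` by a factor `T` exceeding all edge counts of this walk leaves a nonnegative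
balanced budget `T • M - counts`. A greedy walk inside a balanced budget can only get stuck at its
starting vertex, so at each vertex we can splice in a closed walk that uses up all remaining
out-edges of that vertex. After every vertex has been treated the budget is exhausted, so each
window `φ` occurs exactly `T * M φ` times among the `T * N` windows of the final word.
-/

namespace Word

variable {A : Type*}

lemma prefix_append_iff_of_length_le {y z : List A} (v : List A) (h : y.length ≤ z.length) :
    y <+: z ++ v ↔ y <+: z := by
  rw [List.prefix_iff_eq_take, List.prefix_iff_eq_take, List.take_append_of_le_length h]

lemma append_singleton_prefix_iff {x z : List A} (a : A) (h : x.length < z.length) :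
    x ++ [a] <+: z ↔ x <+: z ∧ z[x.length] = a := by
  rw [List.prefix_iff_eq_take, List.prefix_iff_eq_take (l₁ := x), List.length_append,
    List.length_singleton, List.take_add_one, List.getElem?_eq_getElem h, Option.toList_some]
  constructor
  · intro h'
    obtain ⟨h1, h2⟩ := List.append_inj' h' rfl
    exact ⟨h1, (List.singleton_inj.mp h2).symm⟩
  · rintro ⟨h1, rfl⟩
    rw [← h1]

lemma ofFn_prefix_iff {n : ℕ} (φ : Fin n → A) {z : List A} (h : n ≤ z.length) :
    List.ofFn φ <+: z ↔ (fun j : Fin n => z[(j : ℕ)]) = φ := by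
  have htake : z.take n = List.ofFn (fun j : Fin n => z[(j : ℕ)]) := by
    apply List.ext_getElem <;> simp [h]
  rw [List.prefix_iff_eq_take, List.length_ofFn, htake, List.ofFn_inj, eq_comm]

lemma exists_ofFn_eq {n : ℕ} {y : List A} (hy : y.length = n) : ∃ φ : Fin n → A, List.ofFn φ = y :=
  ⟨fun j => y[(j : ℕ)], List.ext_getElem (by simp [hy]) (by simp)⟩

def onWords {n : ℕ} (M : (Fin n → A) → ℕ) (y : List A) : ℕ :=
  if h : y.length = n then M (fun j => y[(j : ℕ)]) else 0

lemma onWords_ofFn {n : ℕ} (M : (Fin n → A) → ℕ) (φ : Fin n → A) :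
    onWords M (List.ofFn φ) = M φ := by
  simp [onWords]

section

variable [Fintype A]

lemma exists_list_forall_mem_iff_length_eq (m : ℕ) :
    ∃ l : List (List A), ∀ x, x ∈ l ↔ x.length = m :=
  ⟨(univ : Finset (Fin m → A)).toList.map List.ofFn, fun x => by
    simp only [List.mem_map, mem_toList, mem_univ, true_and]
    exact ⟨fun ⟨φ, hφ⟩ => hφ ▸ List.length_ofFn, exists_ofFn_eq⟩⟩

def Balanced (m : ℕ) (e : List A → ℕ) : Prop :=
  ∀ x : List A, x.length = m → ∑ a, e (x ++ [a]) = ∑ a, e (a :: x)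

lemma Balanced.const_mul {m : ℕ} {e : List A → ℕ} (he : Balanced m e) (T : ℕ) :
    Balanced m (fun y => T * e y) := fun x hx => by
  simp only [← mul_sum, he x hx]

lemma Balanced.sub {m : ℕ} {e f : List A → ℕ} (he : Balanced m e) (hf : Balanced m f)
    (hfe : ∀ y : List A, y.length = m + 1 → f y ≤ e y) : Balanced m (fun y => e y - f y) := by
  intro x hx
  show ∑ a, (e (x ++ [a]) - f (x ++ [a])) = ∑ a, (e (a :: x) - f (a :: x))
  have hsub : ∀ y : List A, y.length = m + 1 → e y - f y + f y = e y :=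
    fun y hy => Nat.sub_add_cancel (hfe y hy)
  have hout : ∑ a, (e (x ++ [a]) - f (x ++ [a])) + ∑ a, f (x ++ [a]) = ∑ a, e (x ++ [a]) := by
    rw [← sum_add_distrib]
    exact sum_congr rfl fun a _ => hsub _ (by simp [hx])
  have hin : ∑ a, (e (a :: x) - f (a :: x)) + ∑ a, f (a :: x) = ∑ a, e (a :: x) := by
    rw [← sum_add_distrib]
    exact sum_congr rfl fun a _ => hsub _ (by simp [hx])
  have := he x hx
  have := hf x hx
  omega

lemma balanced_onWords {m : ℕ} {M : (Fin (m + 1) → A) → ℕ}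
    (hM : ∀ ψ : Fin m → A, ∑ a, M (Fin.cons a ψ) = ∑ a, M (Fin.snoc ψ a)) :
    Balanced m (onWords M) := by
  intro x hx
  obtain ⟨ψ, rfl⟩ := exists_ofFn_eq hx
  have hsnoc : ∀ a, List.ofFn ψ ++ [a] = List.ofFn (Fin.snoc ψ a) := fun a => by
    rw [List.ofFn_succ_last]
    simp
  simp only [hsnoc, ← List.ofFn_cons, onWords_ofFn]
  exact (hM ψ).symm

end

variable [DecidableEq A]

def occ (y w : List A) : ℕ :=
  ((range (w.length + 1 - y.length)).filter (fun i => y <+: w.drop i)).card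

lemma occ_eq_sum (y w : List A) :
    occ y w = ∑ i ∈ range (w.length + 1 - y.length), if y <+: w.drop i then 1 else 0 :=
  card_filter _ _

lemma occ_le (y w : List A) : occ y w ≤ w.length + 1 - y.length :=
  (card_filter_le _ _).trans (card_range _).le

lemma occ_append {x y u : List A} (v : List A) (hy : y.length = x.length + 1) (hx : x <:+ u) :
    occ y (u ++ v) = occ y u + occ y (x ++ v) := by
  obtain ⟨p, rfl⟩ := hx
  simp only [occ_eq_sum, List.length_append, hy]
  rw [show p.length + x.length + v.length + 1 - (x.length + 1) = p.length + v.length by omega,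
    show p.length + x.length + 1 - (x.length + 1) = p.length by omega,
    show x.length + v.length + 1 - (x.length + 1) = v.length by omega, sum_range_add]
  congr 1
  · refine sum_congr rfl fun i hi => ?_
    have hi : i < p.length := mem_range.mp hi
    rw [List.drop_append_of_le_length (by simp; omega)]
    exact if_congr (prefix_append_iff_of_length_le v (by simp; omega)) rfl rfl
  · refine sum_congr rfl fun i _ => ?_
    rw [List.append_assoc, List.drop_append, List.drop_eq_nil_of_le (by omega),
      Nat.add_sub_cancel_left, List.nil_append]

lemma occ_of_length_eq {y w : List A} (h : y.length = w.length) :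
    occ y w = if y = w then 1 else 0 := by
  rw [occ_eq_sum, h, Nat.add_sub_cancel_left, sum_range_one, List.drop_zero]
  exact if_congr ⟨fun hp => hp.eq_of_length h, fun hp => hp ▸ List.prefix_refl _⟩ rfl rfl

lemma occ_append_singleton {x y w : List A} (a : A) (hy : y.length = x.length + 1)
    (hx : x <:+ w) : occ y (w ++ [a]) = occ y w + if y = x ++ [a] then 1 else 0 := by
  rw [occ_append [a] hy hx, occ_of_length_eq (w := x ++ [a]) (by simp [hy])]

lemma occ_insert {x y z : List A} (p q : List A) (hy : y.length = x.length + 1)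
    (hpre : x <+: z) (hsuf : x <:+ z) :
    occ y (p ++ z ++ q) = occ y (p ++ x ++ q) + occ y z := by
  obtain ⟨r, rfl⟩ := hpre
  have hxr : x <:+ p ++ x ++ r := by simpa using hsuf.trans (List.suffix_append p (x ++ r))
  calc occ y (p ++ (x ++ r) ++ q) = occ y (p ++ x ++ r ++ q) := by simp only [List.append_assoc]
    _ = occ y (p ++ x) + occ y (x ++ r) + occ y (x ++ q) := by
      rw [occ_append q hy hxr, occ_append r hy (List.suffix_append p x)]
    _ = occ y (p ++ x ++ q) + occ y (x ++ r) := by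
      rw [occ_append q hy (List.suffix_append p x)]; ring

lemma occCount_eq_occ {n : ℕ} {w : List A} (φ : Fin n → A) (h : n ≤ w.length) :
    occCount n w φ = occ (List.ofFn φ) w := by
  rw [occCount, occ, List.length_ofFn, show w.length - n + 1 = w.length + 1 - n by omega]
  congr 1
  refine filter_congr fun i hi => ?_
  have hn : n ≤ (w.drop i).length := by simp at hi ⊢; omega
  rw [ofFn_prefix_iff φ hn, funext_iff]
  refine forall_congr' fun j => ?_
  rw [List.getElem?_eq_some_iff, List.getElem_drop]
  exact ⟨fun ⟨_, hj⟩ => hj, fun hj => ⟨by rw [List.length_drop] at hn; omega, hj⟩⟩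

def IsLoopAt (m : ℕ) (x z : List A) : Prop := x.length = m ∧ x <+: z ∧ x <:+ z

lemma occ_flatten_of_forall₂ {m : ℕ} {y : List A} (hy : y.length = m + 1)
    {xs zs : List (List A)} (h : List.Forall₂ (IsLoopAt m) xs zs) (p q : List A) :
    occ y (p ++ zs.flatten ++ q) = occ y (p ++ xs.flatten ++ q) + (zs.map (occ y)).sum := by
  induction h generalizing p with
  | nil => simp
  | @cons x z xs zs hxz _ ih =>
    obtain ⟨hx, hpre, hsuf⟩ := hxz
    have := ih (p ++ z)
    have := occ_insert p (xs.flatten ++ q) (by rw [hy, hx]) hpre hsuf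
    simp only [List.flatten_cons, List.map_cons, List.sum_cons, List.append_assoc] at *
    omega

variable [Fintype A]

lemma sum_boole_of_iff_and_eq {Q : Prop} [Decidable Q] (P : A → Prop) [DecidablePred P] (c : A)
    (h : ∀ a, P a ↔ Q ∧ c = a) : (∑ a, if P a then 1 else 0 : ℕ) = if Q then 1 else 0 := by
  simp_rw [h]
  by_cases hQ : Q <;> simp [hQ]

lemma sum_occ_append_singleton_add {x w : List A} (h : x.length ≤ w.length) :
    (∑ a, occ (x ++ [a]) w) + (if x <:+ w then 1 else 0) = occ x w := by
  have hlen : w.length + 1 - x.length = (w.length - x.length) + 1 := by omega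
  simp only [occ_eq_sum, List.length_append, List.length_singleton, hlen, sum_range_succ,
    Nat.add_sub_add_right]
  rw [sum_comm]
  congr 1
  · refine sum_congr rfl fun i hi => ?_
    have hlt : x.length < (w.drop i).length := by simp at hi ⊢; omega
    exact sum_boole_of_iff_and_eq _ _ fun a => append_singleton_prefix_iff a hlt
  · refine if_congr ⟨fun hs => ?_, fun hp => ?_⟩ rfl rfl
    · nth_rw 1 [List.suffix_iff_eq_drop.mp hs]
    · exact List.suffix_iff_eq_drop.mpr (hp.eq_of_length (by simp; omega))

lemma sum_occ_cons_add {x w : List A} (h : x.length ≤ w.length) :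
    (∑ a, occ (a :: x) w) + (if x <+: w then 1 else 0) = occ x w := by
  have hlen : w.length + 1 - x.length = (w.length - x.length) + 1 := by omega
  simp only [occ_eq_sum, List.length_cons, hlen, sum_range_succ', List.drop_zero,
    Nat.add_sub_add_right]
  rw [sum_comm]
  congr 1
  refine sum_congr rfl fun i hi => sum_boole_of_iff_and_eq _ (w[i]'(by simp at hi; omega))
    fun a => ?_
  rw [List.drop_eq_getElem_cons (by simp at hi; omega), List.cons_prefix_cons]
  tauto

lemma sum_occ_ofFn (n : ℕ) (w : List A) :
    ∑ φ : Fin n → A, occ (List.ofFn φ) w = w.length + 1 - n := by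
  simp only [occ_eq_sum, List.length_ofFn]
  rw [sum_comm]
  have hwindow : ∀ i ∈ range (w.length + 1 - n),
      (∑ φ : Fin n → A, if List.ofFn φ <+: w.drop i then 1 else 0) = 1 := fun i hi => by
    have hn : n ≤ (w.drop i).length := by simp at hi ⊢; omega
    simp_rw [ofFn_prefix_iff _ hn]
    simp
  rw [sum_congr rfl hwindow, sum_const, card_range, smul_eq_mul, mul_one]

lemma balanced_occ {m : ℕ} {s z : List A} (hs : s.length = m) (hpre : s <+: z)
    (hsuf : s <:+ z) : Balanced m (occ · z) := by
  intro x hx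
  show ∑ a, occ (x ++ [a]) z = ∑ a, occ (a :: x) z
  have hle : x.length ≤ z.length := hx ▸ hs ▸ hpre.length_le
  have hout := sum_occ_append_singleton_add hle
  have hin := sum_occ_cons_add hle
  by_cases hxs : x = s
  · subst hxs
    simp only [hpre, hsuf, if_true] at hout hin
    omega
  · have hnsuf : ¬ x <:+ z := fun h =>
      hxs ((List.suffix_of_suffix_length_le h hsuf (by omega)).eq_of_length (by omega))
    have hnpre : ¬ x <+: z := fun h =>
      hxs ((List.prefix_of_prefix_length_le h hpre (by omega)).eq_of_length (by omega))
    simp only [hnsuf, hnpre, if_false] at hout hin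
    omega

lemma length_lt_of_occ_lt {m : ℕ} {R : List A → ℕ} {w : List A} (hw : m ≤ w.length)
    (hR : ∀ y : List A, y.length = m + 1 → occ y w ≤ R y) {y : List A} (hy : y.length = m + 1)
    (hroom : occ y w < R y) : w.length < ∑ φ : Fin (m + 1) → A, R (List.ofFn φ) + m := by
  obtain ⟨ψ, rfl⟩ := exists_ofFn_eq hy
  have := sum_lt_sum (fun φ _ => hR (List.ofFn φ) (by simp)) ⟨ψ, mem_univ _, hroom⟩
  rw [sum_occ_ofFn] at this
  omega

lemma exists_saturated_extension {m : ℕ} (R : List A → ℕ) (w : List A) (hw : m ≤ w.length)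
    (hR : ∀ y : List A, y.length = m + 1 → occ y w ≤ R y) :
    ∃ r, (∀ y : List A, y.length = m + 1 → occ y (w ++ r) ≤ R y) ∧
      ∀ a, R ((w ++ r).rtake m ++ [a]) ≤ occ ((w ++ r).rtake m ++ [a]) (w ++ r) := by
  by_cases hroom : ∃ a, occ (w.rtake m ++ [a]) w < R (w.rtake m ++ [a])
  · obtain ⟨a, ha⟩ := hroom
    have hlen : (w.rtake m).length = m := by simp [List.rtake]; omega
    have hR' : ∀ y : List A, y.length = m + 1 → occ y (w ++ [a]) ≤ R y := by
      intro y hy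
      rw [occ_append_singleton (x := w.rtake m) a (by rw [hy, hlen]) (List.drop_suffix _ w)]
      split_ifs with h
      · subst h; omega
      · simpa using hR y hy
    have hdec := length_lt_of_occ_lt hw hR (by simp [hlen]) ha
    obtain ⟨r, hr, hsat⟩ := exists_saturated_extension R (w ++ [a]) (by simp; omega) hR'
    exact ⟨a :: r, by simpa using hr, by simpa using hsat⟩
  · push Not at hroom
    exact ⟨[], by simpa using hR, by simpa using hroom⟩
termination_by ∑ φ : Fin (m + 1) → A, R (List.ofFn φ) + m - w.length
decreasing_by rw [List.length_append, List.length_singleton]; omega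

lemma rtake_eq_of_saturated {m : ℕ} {R : List A → ℕ} (hR : Balanced m R) {s w : List A}
    (hs : s.length = m) (hsw : s <+: w) (hle : ∀ y : List A, y.length = m + 1 → occ y w ≤ R y)
    (hsat : ∀ a, R (w.rtake m ++ [a]) ≤ occ (w.rtake m ++ [a]) w) : w.rtake m = s := by
  set x := w.rtake m
  have hmw : m ≤ w.length := hs ▸ hsw.length_le
  have hx : x.length = m := by simp [x, List.rtake]; omega
  by_contra hxs
  have hout := sum_occ_append_singleton_add (x := x) (w := w) (by omega)
  have hin := sum_occ_cons_add (x := x) (w := w) (by omega)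
  have hnpre : ¬ x <+: w := fun h =>
    hxs ((List.prefix_of_prefix_length_le h hsw (by omega)).eq_of_length (by omega))
  -- The walk `w` leaves `x` once less often than it enters it, so balance leaves room to exit.
  have hxw : x <:+ w := List.drop_suffix _ w
  rw [if_pos hxw] at hout
  rw [if_neg hnpre] at hin
  have hsat' := sum_le_sum fun a (_ : a ∈ univ) => hsat a
  have hin' := sum_le_sum fun a (_ : a ∈ univ) => hle (a :: x) (by simp [hx])
  rw [hR x hx] at hsat'
  omega

lemma exists_loop_saturating {m : ℕ} {R : List A → ℕ} (hR : Balanced m R) {s : List A}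
    (hs : s.length = m) :
    ∃ z, s <+: z ∧ s <:+ z ∧ (∀ y : List A, y.length = m + 1 → occ y z ≤ R y) ∧
      ∀ a, occ (s ++ [a]) z = R (s ++ [a]) := by
  have hempty : ∀ y : List A, y.length = m + 1 → occ y s ≤ R y := fun y hy =>
    (occ_le y s).trans (by omega)
  obtain ⟨r, hle, hsat⟩ := exists_saturated_extension R s hs.ge hempty
  have hend := rtake_eq_of_saturated hR hs (List.prefix_append s r) hle hsat
  have hsuf : (s ++ r).rtake m <:+ s ++ r := List.drop_suffix _ _
  rw [hend] at hsat hsuf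
  refine ⟨s ++ r, List.prefix_append s r, hsuf, hle, fun a => ?_⟩
  exact le_antisymm (hle _ (by simp [hs])) (hsat a)

lemma exists_loops_saturating {m : ℕ} (xs : List (List A)) (hxs : ∀ x ∈ xs, x.length = m)
    {R : List A → ℕ} (hR : Balanced m R) :
    ∃ zs, List.Forall₂ (IsLoopAt m) xs zs ∧
      (∀ y : List A, y.length = m + 1 → (zs.map (occ y)).sum ≤ R y) ∧
      ∀ x ∈ xs, ∀ a, (zs.map (occ (x ++ [a]))).sum = R (x ++ [a]) := by
  induction xs generalizing R with
  | nil => exact ⟨[], List.Forall₂.nil, fun _ _ => by simp, by simp⟩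
  | cons x xs ih =>
    have hx := hxs x List.mem_cons_self
    obtain ⟨z, hpre, hsuf, hzR, hzsat⟩ := exists_loop_saturating hR hx
    obtain ⟨zs, hloops, hle, hsat⟩ := ih (fun x' hx' => hxs x' (List.mem_cons_of_mem x hx'))
      (hR.sub (balanced_occ hx hpre hsuf) hzR)
    refine ⟨z :: zs, List.Forall₂.cons ⟨hx, hpre, hsuf⟩ hloops, fun y hy => ?_, fun x' hx' a => ?_⟩
    · have := hle y hy
      have := hzR y hy
      simp only [List.map_cons, List.sum_cons]
      omega
    · have hxa : (x' ++ [a]).length = m + 1 := by simp [hxs x' hx']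
      have := hle _ hxa
      have := hzR _ hxa
      simp only [List.map_cons, List.sum_cons]
      rcases List.mem_cons.mp hx' with rfl | hx'
      · have := hzsat a
        omega
      · have := hsat x' hx' a
        omega

theorem exists_append_occ_ofFn_eq_mul [Nonempty A] {m : ℕ} {M : (Fin (m + 1) → A) → ℕ}
    (hpos : ∀ φ, 0 < M φ)
    (hbal : ∀ ψ : Fin m → A, ∑ a, M (Fin.cons a ψ) = ∑ a, M (Fin.snoc ψ a)) (α : List A) :
    ∃ β T, 0 < T ∧ ∀ φ, occ (List.ofFn φ) (α ++ β) = T * M φ := by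
  obtain ⟨a₀⟩ := ‹Nonempty A›
  obtain ⟨verts, hverts⟩ := exists_list_forall_mem_iff_length_eq (A := A) m
  set α₀ := α ++ List.replicate m a₀
  set s := α₀.take m
  -- a closed walk from `s` back to `s` through every vertex
  set base := α₀ ++ verts.flatten ++ s
  set T := base.length + 1
  have hs : s.length = m := by simp [s, α₀]
  have hbase : Balanced m (occ · base) := balanced_occ hs
    ((List.take_prefix m α₀).trans (by simp [base, List.append_assoc])) (List.suffix_append _ _)
  have hbaseT : ∀ y : List A, y.length = m + 1 → occ y base ≤ T * onWords M y := fun y hy => by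
    obtain ⟨φ, rfl⟩ := exists_ofFn_eq hy
    rw [onWords_ofFn]
    exact (occ_le _ _).trans ((Nat.sub_le _ _).trans (Nat.le_mul_of_pos_right T (hpos φ)))
  obtain ⟨zs, hloops, -, hsat⟩ := exists_loops_saturating verts (fun x => (hverts x).mp)
    (((balanced_onWords hbal).const_mul T).sub hbase hbaseT)
  refine ⟨List.replicate m a₀ ++ zs.flatten ++ s, T, Nat.succ_pos _, fun φ => ?_⟩
  have hlast : List.ofFn φ = List.ofFn (fun i => φ i.castSucc) ++ [φ (Fin.last m)] :=
    List.ofFn_succ_last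
  have hφ := hsat (List.ofFn fun i => φ i.castSucc) ((hverts _).mpr List.length_ofFn)
    (φ (Fin.last m))
  have hφT := hbaseT (List.ofFn φ) (by simp)
  rw [← hlast, onWords_ofFn] at hφ
  rw [onWords_ofFn] at hφT
  rw [show α ++ (List.replicate m a₀ ++ zs.flatten ++ s) = α₀ ++ zs.flatten ++ s by
      simp [α₀, List.append_assoc],
    occ_flatten_of_forall₂ (by simp) hloops]
  change occ _ base + _ = _
  omega

end Word

lemma exists_nat_scaling_of_rat_pos {ι : Type*} [Fintype ι] (η : ι → ℝ)
    (hrat : ∀ i, ∃ q : ℚ, η i = q) (hpos : ∀ i, 0 < η i) :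
    ∃ N : ℕ, 0 < N ∧ ∀ i, ∃ M : ℕ, 0 < M ∧ (M : ℝ) = N * η i := by
  choose q hq using hrat
  have hN : 0 < ∏ i, (q i).den := prod_pos fun i _ => (q i).den_pos
  refine ⟨∏ i, (q i).den, hN, fun i => ?_⟩
  obtain ⟨t, ht⟩ := dvd_prod_of_mem (fun i => (q i).den) (mem_univ i)
  have hnum : 0 < (q i).num := Rat.num_pos.mpr (by exact_mod_cast hq i ▸ hpos i)
  obtain ⟨n, hn⟩ := Int.eq_ofNat_of_zero_le hnum.le
  have hqn : (q i : ℝ) * (q i).den = n := by exact_mod_cast hn ▸ Rat.mul_den_eq_num (q i)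
  refine ⟨n * t, Nat.mul_pos (by omega) (Nat.pos_of_mul_pos_left (ht ▸ hN)), ?_⟩
  rw [ht, hq i]
  push_cast
  rw [← hqn]
  ring

theorem stmt11 {A : Type*} [Fintype A] [DecidableEq A] (k : ℕ)
    (η : (Fin (k + 2) → A) → ℝ) (hprob : IsProbVec η)
    (hrat : ∀ φ, ∃ q : ℚ, η φ = (q : ℝ)) (hpos : ∀ φ, 0 < η φ)
    (hsi : ShiftInv k η) (α : List A) :
    ∃ β : List A, k + 2 ≤ (α ++ β).length ∧ ∀ φ, freq (k + 2) (α ++ β) φ = η φ := by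
  obtain ⟨φ₀, -, -⟩ := exists_ne_zero_of_sum_ne_zero (hprob.2.symm ▸ one_ne_zero : ∑ φ, η φ ≠ 0)
  have : Nonempty A := ⟨φ₀ 0⟩
  obtain ⟨N, hN, hM⟩ := exists_nat_scaling_of_rat_pos η hrat hpos
  choose M hMpos hMη using hM
  have hMsum : ∑ φ, M φ = N := by
    exact_mod_cast (show (∑ φ, M φ : ℝ) = N by simp [hMη, ← mul_sum, hprob.2])
  have hMbal : ∀ ψ, ∑ a, M (Fin.cons a ψ) = ∑ a, M (Fin.snoc ψ a) := fun ψ => by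
    exact_mod_cast (show (∑ a, M (Fin.cons a ψ) : ℝ) = ∑ a, M (Fin.snoc ψ a) by
      simp [hMη, ← mul_sum, hsi ψ])
  obtain ⟨β, T, hT, hocc⟩ := Word.exists_append_occ_ofFn_eq_mul hMpos hMbal α
  have hwindows : (α ++ β).length + 1 - (k + 2) = T * N := by
    rw [← Word.sum_occ_ofFn, ← hMsum, mul_sum]
    exact sum_congr rfl fun φ _ => hocc φ
  have hlen : k + 2 ≤ (α ++ β).length := by have := Nat.mul_pos hT hN; omega
  refine ⟨β, hlen, fun φ => ?_⟩
  rw [freq, Word.occCount_eq_occ φ hlen, hocc, show (α ++ β).length - (k + 2) + 1 = T * N by omega]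
  push_cast
  rw [hMη]
  field_simp
end

section
/- For the binary alphabet Σ = {0,1}, k = 2, and Γ = { μ ∈ P(Σ²) : μ(00) < 1/2, μ(11) < 1/2, μ(01) = 0 }, the set of admissible words of length ≥ 2 is exactly { 0^n 1^n : n ∈ ℕ, n ≥ 1 }, which is not a regular language. -/
open Finset

/-! A word without the factor `10` is sorted, `0^a 1^b`, and then `00` and `11` occur `a - 1` and
`b - 1` times among its `a + b - 1` positions; both frequencies are below `1/2` exactly when
`a = b`. Non-regularity is Myhill–Nerode: the left quotients by the words `0^m`, `m ≥ 1`, are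
pairwise distinct, since `1^m` lies in the one by `0^m` only. -/

theorem List.getElem?_replicate_append_replicate {α : Type*} (x y : α) (a b i : ℕ) :
    (List.replicate a x ++ List.replicate b y)[i]? =
      if i < a then some x else if i < a + b then some y else none := by
  simp only [List.getElem?_append, List.length_replicate, List.getElem?_replicate]
  split_ifs <;> first | rfl | omega

theorem List.eq_of_replicate_append_replicate_eq {α : Type*} [DecidableEq α] {x y : α}
    (hxy : x ≠ y) {a b c d : ℕ}
    (h : List.replicate a x ++ List.replicate b y = List.replicate c x ++ List.replicate d y) :
    a = c ∧ b = d := by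
  have hx := congrArg (List.count x) h
  have hy := congrArg (List.count y) h
  simp only [List.count_append, List.count_replicate_self, List.count_replicate, beq_iff_eq,
    hxy, hxy.symm, if_false, add_zero, zero_add] at hx hy
  omega

theorem List.exists_eq_replicate_append_replicate {ω : List Bool}
    (h : ∀ i, ¬(ω[i]? = some true ∧ ω[i + 1]? = some false)) :
    ∃ a b, ω = List.replicate a false ++ List.replicate b true := by
  induction ω with
  | nil => exact ⟨0, 0, rfl⟩
  | cons x xs ih =>
    obtain ⟨a, b, rfl⟩ := ih fun i => by simpa using h (i + 1)
    cases x
    · exact ⟨a + 1, b, rfl⟩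
    · cases a with
      | zero => exact ⟨0, b + 1, rfl⟩
      | succ a => exact absurd ⟨rfl, rfl⟩ (h 0)

section Occurrences

variable {A : Type*} [DecidableEq A]

theorem occCount_two (ω : List A) (x y : A) :
    occCount 2 ω ![x, y] =
      #{i ∈ range (ω.length - 2 + 1) | ω[i]? = some x ∧ ω[i + 1]? = some y} := by
  simp only [occCount, Fin.forall_fin_two]
  rfl

theorem occCount_two_eq_zero_iff (ω : List A) (x y : A) :
    occCount 2 ω ![x, y] = 0 ↔ ∀ i, ¬(ω[i]? = some x ∧ ω[i + 1]? = some y) := by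
  rw [occCount_two, card_eq_zero, filter_eq_empty_iff]
  refine ⟨fun h i hi => h (mem_range.2 ?_) hi, fun h i _ => h i⟩
  have := (List.getElem?_eq_some_iff.1 hi.2).1
  omega

theorem freq_eq_zero_iff (k : ℕ) (ω : List A) (φ : Fin k → A) :
    freq k ω φ = 0 ↔ occCount k ω φ = 0 := by
  rw [freq, div_eq_zero_iff, or_iff_left (Nat.cast_ne_zero.2 (Nat.succ_ne_zero _)),
    Nat.cast_eq_zero]

theorem freq_lt_half_iff (k : ℕ) (ω : List A) (φ : Fin k → A) :
    freq k ω φ < 1 / 2 ↔ 2 * occCount k ω φ < ω.length - k + 1 := by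
  rw [freq, div_lt_iff₀ (by positivity), ← Nat.cast_lt (α := ℝ)]
  push_cast
  constructor <;> intro h <;> linarith

variable {x y : A}

theorem occCount_replicate_append_replicate_left (hxy : x ≠ y) (a b : ℕ) :
    occCount 2 (List.replicate a x ++ List.replicate b y) ![x, x] = a - 1 := by
  rw [occCount_two, ← card_range (a - 1)]
  congr 1
  ext i
  simp only [mem_filter, mem_range, List.length_append, List.length_replicate,
    List.getElem?_replicate_append_replicate]
  split_ifs <;> simp [hxy.symm] <;> omega

theorem occCount_replicate_append_replicate_right (hxy : x ≠ y) (a b : ℕ) :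
    occCount 2 (List.replicate a x ++ List.replicate b y) ![y, y] = b - 1 := by
  rw [occCount_two, show b - 1 = a + b - 1 - a by omega, ← Nat.card_Ico a (a + b - 1)]
  congr 1
  ext i
  simp only [mem_filter, mem_range, mem_Ico, List.length_append, List.length_replicate,
    List.getElem?_replicate_append_replicate]
  split_ifs <;> simp [hxy] <;> omega

theorem occCount_replicate_append_replicate_descent (hxy : x ≠ y) (a b : ℕ) :
    occCount 2 (List.replicate a x ++ List.replicate b y) ![y, x] = 0 := by
  rw [occCount_two_eq_zero_iff]
  intro i
  simp only [List.getElem?_replicate_append_replicate]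
  split_ifs <;> first | omega | simp [hxy, hxy.symm]

end Occurrences

theorem Language.not_isRegular_of_injective_leftQuotient {α : Type*} {L : Language α}
    {f : ℕ → List α} (hf : Function.Injective (L.leftQuotient ∘ f)) : ¬L.IsRegular := fun h =>
  Set.infinite_range_of_injective hf <|
    h.finite_range_leftQuotient.subset (Set.range_comp_subset_range _ _)

def replicateAppendReplicate {α : Type*} (x y : α) : Language α :=
  {ω | ∃ n, 1 ≤ n ∧ ω = List.replicate n x ++ List.replicate n y}

theorem not_isRegular_replicateAppendReplicate {α : Type*} {x y : α} (hxy : x ≠ y) :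
    ¬(replicateAppendReplicate x y).IsRegular := by
  classical
  refine Language.not_isRegular_of_injective_leftQuotient
    (f := fun m => List.replicate (m + 1) x) fun m k hmk => ?_
  have hm : List.replicate (m + 1) y ∈
      (replicateAppendReplicate x y).leftQuotient (List.replicate (k + 1) x) := by
    simp only [Function.comp_apply] at hmk
    exact hmk ▸ ⟨m + 1, by omega, rfl⟩
  obtain ⟨n, -, hn⟩ := hm
  have := List.eq_of_replicate_append_replicate_eq hxy hn
  omega

theorem freq_conditions_iff_exists_eq_replicate_append_replicate {ω : List Bool}
    (hω : 2 ≤ ω.length) :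
    (freq 2 ω ![true, false] = 0 ∧ freq 2 ω ![false, false] < 1 / 2 ∧
        freq 2 ω ![true, true] < 1 / 2) ↔
      ∃ n, 1 ≤ n ∧ ω = List.replicate n false ++ List.replicate n true := by
  simp only [freq_eq_zero_iff, freq_lt_half_iff, occCount_two_eq_zero_iff]
  constructor
  · rintro ⟨hdescent, h00, h11⟩
    obtain ⟨a, b, rfl⟩ := List.exists_eq_replicate_append_replicate hdescent
    rw [occCount_replicate_append_replicate_left Bool.false_ne_true] at h00
    rw [occCount_replicate_append_replicate_right Bool.false_ne_true] at h11
    simp only [List.length_append, List.length_replicate] at hω h00 h11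
    exact ⟨a, by omega, by rw [show b = a by omega]⟩
  · rintro ⟨n, hn, rfl⟩
    rw [← occCount_two_eq_zero_iff, occCount_replicate_append_replicate_descent Bool.false_ne_true,
      occCount_replicate_append_replicate_left Bool.false_ne_true,
      occCount_replicate_append_replicate_right Bool.false_ne_true, List.length_append,
      List.length_replicate, List.length_replicate]
    exact ⟨rfl, by omega, by omega⟩

theorem stmt18 :
    (∀ ω : List Bool, 2 ≤ ω.length →
      ((freq 2 ω ![true, false] = 0 ∧ freq 2 ω ![false, false] < 1 / 2 ∧
          freq 2 ω ![true, true] < 1 / 2) ↔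
        ∃ n : ℕ, 1 ≤ n ∧ ω = List.replicate n false ++ List.replicate n true)) ∧
    ¬ Language.IsRegular (show Language Bool from
        {ω : List Bool | ∃ n : ℕ, 1 ≤ n ∧
          ω = List.replicate n false ++ List.replicate n true}) :=
  ⟨fun _ => freq_conditions_iff_exists_eq_replicate_append_replicate,
    not_isRegular_replicateAppendReplicate Bool.false_ne_true⟩
end
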